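/- arXiv:1810.12258 — 6 statements merged into one kernel-verified Lean document; each statement's English description precedes it below -/
import Mathlib

section
/- For positive integers p, q, the polynomial ∑_{i=0}^{min(p,q)} 4^i C(p,i) C(q,i) x^i has only real roots. -/
open Polynomial Finset

/-- The γ-polynomial of the h*-polynomial of `B_{K_{p,q}}`. -/
noncomputable def gammaKpq (p q : ℕ) : Polynomial ℝ :=
  ∑ i ∈ Finset.range (min p q + 1), C ((4 : ℝ) ^ i * p.choose i * q.choose i) * X ^ i

/-!
With `u = 4x`, the polynomial is `F(u) = ∑ C(p,i) C(q,i) uⁱ`. By the Leibniz rule,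
`D^q [X^q (X+1)^p] = q! ∑ C(p,i) C(q,i) Xⁱ (X+1)^(p-i)`, and the real Möbius substitution
`w = u / (1 - u)` turns this into `(1 - u)^p D^q [X^q (X+1)^p](w) = q! F(u)`.
Since `X^q (X+1)^p` has only real roots, so do its derivatives (Rolle), so a root `u` of `F`
gives a real `w`, and then `u` is real as well.
-/

open scoped Nat

theorem Nat.choose_mul_descFactorial_sub_mul_descFactorial {p q k : ℕ} (hk : k ≤ q) :
    q.choose k * (q.descFactorial (q - k) * p.descFactorial k) =
      q ! * (p.choose k * q.choose k) := by
  rw [Nat.descFactorial_eq_factorial_mul_choose, Nat.descFactorial_eq_factorial_mul_choose,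
    Nat.choose_symm hk, ← Nat.choose_mul_factorial_mul_factorial hk]
  ring

theorem Complex.im_eq_zero_of_im_div_one_sub_eq_zero {u : ℂ} (h : (u / (1 - u)).im = 0) :
    u.im = 0 := by
  have him : (u / (1 - u)).im = u.im / Complex.normSq (1 - u) := by
    simp only [Complex.div_im, Complex.sub_re, Complex.sub_im, Complex.one_re, Complex.one_im]
    ring
  rcases div_eq_zero_iff.mp (him ▸ h) with h | h
  · exact h
  · rw [Complex.normSq_eq_zero, sub_eq_zero] at h
    simp [← h]

namespace Polynomial

theorem Splits.derivative {f : ℝ[X]} (hf : f.Splits) : (Polynomial.derivative f).Splits := by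
  rw [splits_iff_card_roots] at hf ⊢
  have := card_roots_le_derivative f
  have := natDegree_derivative_le f
  have := card_roots' (Polynomial.derivative f)
  omega

theorem Splits.iterate_derivative {f : ℝ[X]} (hf : f.Splits) (k : ℕ) :
    (Polynomial.derivative^[k] f).Splits := by
  induction k with
  | zero => exact hf
  | succ k ih => rw [Function.iterate_succ_apply']; exact ih.derivative

theorem iterate_derivative_X_pow_mul_X_add_one_pow {R : Type*} [CommRing R] (p q : ℕ) :
    derivative^[q] (X ^ q * (X + 1) ^ p : R[X]) =
      (q ! : R[X]) * ∑ i ∈ range (q + 1),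
        (p.choose i * q.choose i : R[X]) * X ^ i * (X + 1) ^ (p - i) := by
  rw [iterate_derivative_mul, mul_sum]
  refine sum_congr rfl fun k hk => ?_
  have hkq : k ≤ q := Nat.lt_succ_iff.mp (mem_range.mp hk)
  rw [iterate_derivative_X_pow_eq_natCast_mul, ← C_1, iterate_derivative_X_add_pow, C_1,
    Nat.sub_sub_self hkq, nsmul_eq_mul, nsmul_eq_mul]
  have hcoeff := congrArg (Nat.cast : ℕ → R[X])
    (Nat.choose_mul_descFactorial_sub_mul_descFactorial (p := p) hkq)
  push_cast at hcoeff
  linear_combination hcoeff * X ^ k * (X + 1) ^ (p - k)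

theorem eval_zero_iterate_derivative_X_pow_mul_X_add_one_pow {R : Type*} [CommRing R]
    (p q : ℕ) : eval 0 (derivative^[q] (X ^ q * (X + 1) ^ p : R[X])) = q ! := by
  simp [iterate_derivative_X_pow_mul_X_add_one_pow, eval_finsetSum, sum_range_succ']

theorem one_sub_pow_mul_eval_iterate_derivative_X_pow_mul_X_add_one_pow {K : Type*} [Field K]
    (p q : ℕ) {u : K} (hu : 1 - u ≠ 0) :
    (1 - u) ^ p * eval (u / (1 - u)) (derivative^[q] (X ^ q * (X + 1) ^ p : K[X])) =
      q ! * ∑ i ∈ range (q + 1), (p.choose i * q.choose i : K) * u ^ i := by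
  have hterm {i : ℕ} (hi : i ≤ p) :
      (1 - u) ^ p * ((u / (1 - u)) ^ i * (u / (1 - u) + 1) ^ (p - i)) = u ^ i := by
    have hw : u / (1 - u) + 1 = (1 - u)⁻¹ := by field_simp; ring
    obtain ⟨m, rfl⟩ := Nat.exists_eq_add_of_le hi
    rw [hw, Nat.add_sub_cancel_left, pow_add, div_pow, inv_pow]
    field_simp
  simp only [iterate_derivative_X_pow_mul_X_add_one_pow, eval_mul, eval_natCast, eval_finsetSum,
    eval_pow, eval_X, eval_add, eval_one]
  rw [mul_left_comm, mul_sum]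
  congr 1
  refine sum_congr rfl fun i _ => ?_
  by_cases hi : i ≤ p
  · rw [← hterm hi]
    ring
  · simp [Nat.choose_eq_zero_of_lt (not_le.mp hi)]

end Polynomial

theorem eval_map_gammaKpq (p q : ℕ) (z : ℂ) :
    ((gammaKpq p q).map (algebraMap ℝ ℂ)).eval z =
      ∑ i ∈ range (q + 1), (p.choose i * q.choose i : ℂ) * (4 * z) ^ i := by
  rw [gammaKpq, Polynomial.map_sum, eval_finsetSum]
  symm
  refine (sum_subset (range_subset_range.mpr (by omega)) fun i hi hni => ?_).symm.trans
    (sum_congr rfl fun i _ => ?_)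
  · have hpi : p < i := by simp only [mem_range] at hi hni; omega
    simp [Nat.choose_eq_zero_of_lt hpi]
  · simp
    ring

theorem stmt2_general (p q : ℕ) :
    ∀ z : ℂ, ((gammaKpq p q).map (algebraMap ℝ ℂ)).eval z = 0 → z.im = 0 := by
  intro z hz
  set u := 4 * z
  suffices u.im = 0 by simpa [u] using this
  by_cases hu : 1 - u = 0
  · simp [← sub_eq_zero.mp hu]
  set g : ℝ[X] := derivative^[q] (X ^ q * (X + 1) ^ p) with hg_def
  have hg : g.Splits := by
    refine Splits.iterate_derivative ?_ q
    simpa using (Splits.X_pow q).mul ((Splits.X_add_C (1 : ℝ)).pow p)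
  have hg0 : g ≠ 0 := by
    intro h
    have := eval_zero_iterate_derivative_X_pow_mul_X_add_one_pow (R := ℝ) p q
    rw [← hg_def, h, eval_zero] at this
    exact q.factorial_ne_zero (by exact_mod_cast this.symm)
  have hroot : (g.map (algebraMap ℝ ℂ)).IsRoot (u / (1 - u)) := by
    have hmap : g.map (algebraMap ℝ ℂ) = derivative^[q] (X ^ q * (X + 1) ^ p) := by
      simp only [g, ← iterate_derivative_map]
      simp
    have key := one_sub_pow_mul_eval_iterate_derivative_X_pow_mul_X_add_one_pow p q hu
    rw [← eval_map_gammaKpq, hz, mul_zero] at key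
    rw [IsRoot.def, hmap]
    exact (mul_eq_zero.mp key).resolve_left (pow_ne_zero _ hu)
  obtain ⟨r, hr⟩ := hg.mem_range_of_isRoot hg0 hroot
  exact Complex.im_eq_zero_of_im_div_one_sub_eq_zero (by rw [← hr]; exact Complex.ofReal_im r)

/-- `∑_i 4^i C(p,i) C(q,i) x^i` has only real roots. -/
theorem stmt2 (p q : ℕ) (hp : 0 < p) (hq : 0 < q) :
    ∀ z : ℂ, ((gammaKpq p q).map (algebraMap ℝ ℂ)).eval z = 0 → z.im = 0 :=
  stmt2_general p q
end

section
/- Let P be the poset on [p+q] that is the disjoint union of two chains 1 < 2 < ⋯ < p and p+1 < p+2 < ⋯ < p+q (naturally labeled). Then the P-Eulerian polynomial W(P)(x) = ∑_{π ∈ L(P)} x^{des(π)}, where L(P) is the set of linear extensions of P and des(π) is the number of descents of π, equals ∑_{i=0}^{min(p,q)} C(p,i) C(q,i) x^i. -/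
/-!
A linear extension of two disjoint chains is a shuffle of them, determined by the word in
`{0, 1}^(p+q)` recording from which chain each position is taken; its descents are exactly
the factors `10` of that word. Splitting words by their first two letters gives
`F(n+2, q+1) = F(n+1, q+1) + F(n+1, q) + (X - 1) F(n, q)` for the descent polynomial `F(n, q)`
of words of length `n` with `q` ones, and Pascal's rule shows that `∑ C(p,i) C(q,i) X^i`
satisfies the same recurrence in the form `R(p+1, q+1) = R(p, q+1) + R(p+1, q) + (X - 1) R(p, q)`.
-/

open Polynomial Finset

/-- The number of descents of `π`, i.e. of indices `k` with `π(k) > π(k+1)`. -/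
def desNum (p q : ℕ) (π : Equiv.Perm (Fin (p + q))) : ℕ :=
  (Finset.univ.filter (fun k : Fin (p + q) =>
    ∃ l : Fin (p + q), (l : ℕ) = (k : ℕ) + 1 ∧ π l < π k)).card

section Descents

variable {α : Type*} {n : ℕ}

def numDescents [LT α] [DecidableLT α] (f : Fin n → α) : ℕ :=
  #{k : Fin n | ∃ l : Fin n, (l : ℕ) = k + 1 ∧ f l < f k}

theorem numDescents_congr [LT α] [DecidableLT α] {β : Type*} [LT β] [DecidableLT β]
    {f : Fin n → α} {g : Fin n → β}
    (h : ∀ k l : Fin n, (l : ℕ) = k + 1 → (f l < f k ↔ g l < g k)) :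
    numDescents f = numDescents g := by
  unfold numDescents
  congr 1
  refine filter_congr fun k _ => ?_
  exact exists_congr fun l => and_congr_right fun hl => h k l hl

theorem numDescents_cons [LT α] [DecidableLT α] (a : α) (f : Fin (n + 1) → α) :
    numDescents (Fin.cons a f : Fin (n + 2) → α) =
      (if f 0 < a then 1 else 0) + numDescents f := by
  rw [numDescents, Fin.card_filter_univ_succ', numDescents]
  congr 2
  · apply propext
    constructor
    · rintro ⟨l, hl, h⟩
      obtain rfl : l = 1 := Fin.ext (by simpa using hl)
      simpa using h
    · intro h
      exact ⟨1, by simp, by simpa using h⟩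
  · refine filter_congr fun k _ => ⟨?_, ?_⟩
    · rintro ⟨l, hl, h⟩
      obtain ⟨l, rfl⟩ :=
        Fin.exists_succ_eq.2 (Fin.ne_of_val_ne (by simp [hl] : (l : ℕ) ≠ 0))
      exact ⟨l, by simpa using hl, by simpa using h⟩
    · rintro ⟨l, hl, h⟩
      exact ⟨l.succ, by simp [hl], by simpa using h⟩

theorem numDescents_cons_of_isMin [Preorder α] [DecidableLT α] {a : α} (ha : IsMin a)
    (f : Fin n → α) : numDescents (Fin.cons a f : Fin (n + 1) → α) = numDescents f := by
  cases n with
  | zero => simp [numDescents]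
  | succ n => rw [numDescents_cons, if_neg ha.not_lt, zero_add]

theorem numDescents_const [Preorder α] [DecidableLT α] (a : α) :
    numDescents (fun _ : Fin n => a) = 0 := by
  simp [numDescents]

end Descents

section Words

variable {n : ℕ}

def wordsWithOnes (n q : ℕ) : Finset (Fin n → Bool) := {w | #{k | w k = true} = q}

noncomputable def wordDescentPoly (n q : ℕ) : ℤ[X] :=
  ∑ w ∈ wordsWithOnes n q, X ^ numDescents w

theorem card_cons_eq_true (b : Bool) (v : Fin n → Bool) :
    #{k | (Fin.cons b v : Fin (n + 1) → Bool) k = true} =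
      (if b then 1 else 0) + #{k | v k = true} := by
  rw [Fin.card_filter_univ_succ']
  simp

theorem sum_pi_bool_succ {M : Type*} [AddCommMonoid M] (f : (Fin (n + 1) → Bool) → M) :
    ∑ w, f w = ∑ v, f (Fin.cons false v) + ∑ v, f (Fin.cons true v) := by
  rw [← (Fin.consEquiv fun _ => Bool).sum_comp, Fintype.sum_prod_type, Fintype.sum_bool,
    add_comm]
  rfl

theorem sum_wordsWithOnes_succ {M : Type*} [AddCommMonoid M] (q : ℕ)
    (f : (Fin (n + 1) → Bool) → M) :
    ∑ w ∈ wordsWithOnes (n + 1) q, f w = ∑ v ∈ wordsWithOnes n q, f (Fin.cons false v) +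
      ∑ v with #{k | v k = true} + 1 = q, f (Fin.cons true v) := by
  simp only [wordsWithOnes, sum_filter, sum_pi_bool_succ, card_cons_eq_true]
  simp [add_comm]

theorem wordsWithOnes_zero : wordsWithOnes n 0 = {fun _ => false} := by
  ext w
  simp [wordsWithOnes, filter_eq_empty_iff, funext_iff]

theorem wordsWithOnes_self : wordsWithOnes n n = {fun _ => true} := by
  ext w
  have := card_filter_eq_iff (s := (univ : Finset (Fin n))) (p := fun k => w k = true)
  simp_all [wordsWithOnes, funext_iff]

theorem wordDescentPoly_zero_right : wordDescentPoly n 0 = 1 := by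
  simp [wordDescentPoly, wordsWithOnes_zero, numDescents_const]

theorem wordDescentPoly_self : wordDescentPoly n n = 1 := by
  simp [wordDescentPoly, wordsWithOnes_self, numDescents_const]

theorem wordDescentPoly_succ_succ (n q : ℕ) : wordDescentPoly (n + 2) (q + 1) =
    wordDescentPoly (n + 1) (q + 1) + wordDescentPoly (n + 1) q +
      (X - 1) * wordDescentPoly n q := by
  have hfalse (m : ℕ) (v : Fin m → Bool) :
      numDescents (Fin.cons false v : Fin (m + 1) → Bool) = numDescents v :=
    numDescents_cons_of_isMin (fun b _ => Bool.false_le b) v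
  have hsplit (m r : ℕ) : wordDescentPoly (m + 1) r = wordDescentPoly m r +
      ∑ v with #{k | v k = true} + 1 = r,
        X ^ numDescents (Fin.cons true v : Fin (m + 1) → Bool) := by
    simp only [wordDescentPoly, sum_wordsWithOnes_succ, hfalse]
  -- after a leading `1`, the second letter creates a descent exactly when it is `0`
  have htrue : ∑ v ∈ wordsWithOnes (n + 1) q,
      X ^ numDescents (Fin.cons true v : Fin (n + 2) → Bool) = X * wordDescentPoly n q +
        ∑ v with #{k | v k = true} + 1 = q,
          X ^ numDescents (Fin.cons true v : Fin (n + 1) → Bool) := by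
    simp [sum_wordsWithOnes_succ, numDescents_cons, hfalse, wordDescentPoly, mul_sum, pow_add,
      pow_succ]
  have hshift : ({v | #{k | v k = true} + 1 = q + 1} : Finset (Fin (n + 1) → Bool)) =
      wordsWithOnes (n + 1) q := by
    simp [wordsWithOnes]
  rw [wordDescentPoly, sum_wordsWithOnes_succ, hshift, htrue, hsplit n q]
  simp only [hfalse, wordDescentPoly]
  ring

end Words

noncomputable def binomProdPoly (p q : ℕ) : ℤ[X] :=
  ∑ i ∈ range (min p q + 1), C ((p.choose i : ℤ) * q.choose i) * X ^ i

theorem coeff_binomProdPoly (p q i : ℕ) :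
    (binomProdPoly p q).coeff i = p.choose i * q.choose i := by
  simp only [binomProdPoly, finsetSum_coeff, coeff_C_mul_X_pow, sum_ite_eq, mem_range]
  split_ifs with hi
  · rfl
  · obtain h | h : p < i ∨ q < i := by omega
    all_goals simp [Nat.choose_eq_zero_of_lt h]

theorem binomProdPoly_zero_right (p : ℕ) : binomProdPoly p 0 = 1 := by
  simp [binomProdPoly]

theorem binomProdPoly_zero_left (q : ℕ) : binomProdPoly 0 q = 1 := by
  simp [binomProdPoly]

theorem binomProdPoly_succ_succ (p q : ℕ) : binomProdPoly (p + 1) (q + 1) =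
    binomProdPoly p (q + 1) + binomProdPoly (p + 1) q + (X - 1) * binomProdPoly p q := by
  ext (_ | i)
  · simp [coeff_binomProdPoly]
  · simp only [coeff_add, sub_mul, one_mul, coeff_sub, coeff_X_mul, coeff_binomProdPoly,
      Nat.choose_succ_succ]
    push_cast
    ring

theorem wordDescentPoly_add_self (p q : ℕ) : wordDescentPoly (p + q) q = binomProdPoly p q := by
  induction p generalizing q with
  | zero => rw [zero_add, wordDescentPoly_self, binomProdPoly_zero_left]
  | succ p ih =>
    induction q with
    | zero => rw [add_zero, wordDescentPoly_zero_right, binomProdPoly_zero_right]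
    | succ q ihq =>
      rw [show p + 1 + (q + 1) = p + q + 2 by omega, wordDescentPoly_succ_succ,
        binomProdPoly_succ_succ, ← ih, ← ih, ← ihq, Nat.add_right_comm p 1 q]
      rfl

section Shuffles

theorem eq_finSumEquivOfFinset {α : Type*} [DecidableEq α] [Fintype α] [LinearOrder α]
    {m n : ℕ} {s : Finset α} (hm : #s = m) (hn : #sᶜ = n) (e : Fin m ⊕ Fin n ≃ α)
    (hl : StrictMono (e ∘ Sum.inl)) (hr : StrictMono (e ∘ Sum.inr))
    (hsl : ∀ i, e (Sum.inl i) ∈ s) (hsr : ∀ j, e (Sum.inr j) ∉ s) :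
    e = finSumEquivOfFinset hm hn := by
  ext (i | j)
  · rw [finSumEquivOfFinset_inl, ← orderEmbOfFin_unique hm hsl hl]
  · rw [finSumEquivOfFinset_inr,
      ← orderEmbOfFin_unique hn (fun j => mem_compl.2 (hsr j)) hr]

variable {p q : ℕ}

def IsShuffle (p q : ℕ) (π : Equiv.Perm (Fin (p + q))) : Prop :=
  ∀ a b : Fin (p + q), a < b → ((a : ℕ) < p ↔ (b : ℕ) < p) → π.symm a < π.symm b

instance : DecidablePred (IsShuffle p q) := fun _ => by unfold IsShuffle; infer_instance

theorem isShuffle_iff {π : Equiv.Perm (Fin (p + q))} :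
    IsShuffle p q π ↔
      StrictMono (π.symm ∘ Fin.castAdd q) ∧ StrictMono (π.symm ∘ Fin.natAdd p) := by
  constructor
  · intro h
    exact ⟨fun i j hij => h _ _ (Fin.strictMono_castAdd q hij) (by simp),
      fun i j hij => h _ _ (Fin.strictMono_natAdd p hij) (by simp)⟩
  · rintro ⟨hl, hr⟩ a b hab hside
    induction a using Fin.addCases <;> induction b using Fin.addCases
    · exact hl ((Fin.strictMono_castAdd q).lt_iff_lt.1 hab)
    · simp at hside
    · simp at hside
    · exact hr ((Fin.natAdd_lt_natAdd_iff p).1 hab)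

def shuffleWord (p : ℕ) (π : Equiv.Perm (Fin (p + q))) : Fin (p + q) → Bool :=
  fun k => decide (p ≤ (π k : ℕ))

theorem card_filter_perm_val_lt (π : Equiv.Perm (Fin (p + q))) :
    #{k | (π k : ℕ) < p} = p := by
  rw [card_equiv π (t := ({a | (a : ℕ) < p} : Finset (Fin (p + q)))) (by simp),
    Fin.card_filter_val_lt]
  omega

theorem card_compl_eq_iff_card_eq {s : Finset (Fin (p + q))} : #sᶜ = q ↔ #s = p := by
  have := card_le_univ s
  rw [card_compl, Fintype.card_fin] at *
  omega

theorem shuffleWord_mem_wordsWithOnes (π : Equiv.Perm (Fin (p + q))) :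
    shuffleWord p π ∈ wordsWithOnes (p + q) q := by
  have h := card_compl_eq_iff_card_eq.2 (card_filter_perm_val_lt π)
  simpa [wordsWithOnes, shuffleWord, compl_filter] using h

theorem IsShuffle.desNum_eq {π : Equiv.Perm (Fin (p + q))} (hπ : IsShuffle p q π) :
    desNum p q π = numDescents (shuffleWord p π) := by
  refine numDescents_congr fun k l hl => ?_
  have hkl : k < l := Fin.lt_def.2 (by omega)
  have hside : π l < π k → ¬ ((π l : ℕ) < p ↔ (π k : ℕ) < p) := fun h hs =>
    (hπ _ _ h hs).not_gt (by simpa using hkl)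
  simp only [shuffleWord, Bool.lt_iff, decide_eq_false_iff_not, decide_eq_true_eq, not_le]
  rw [Fin.lt_def] at hside ⊢
  omega

theorem IsShuffle.finSumFinEquiv_trans_symm {π : Equiv.Perm (Fin (p + q))}
    (hπ : IsShuffle p q π) {s : Finset (Fin (p + q))} (hm : #s = p) (hn : #sᶜ = q)
    (hs : ∀ k, k ∈ s ↔ (π k : ℕ) < p) :
    finSumFinEquiv.trans π.symm = finSumEquivOfFinset hm hn :=
  eq_finSumEquivOfFinset hm hn _ (isShuffle_iff.1 hπ).1 (isShuffle_iff.1 hπ).2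
    (fun i => by simp [hs]) (fun j => by simp [hs])

theorem IsShuffle.eq_of_shuffleWord_eq {π π' : Equiv.Perm (Fin (p + q))} (hπ : IsShuffle p q π)
    (hπ' : IsShuffle p q π') (h : shuffleWord p π = shuffleWord p π') : π = π' := by
  have hm := card_filter_perm_val_lt π
  have hn := card_compl_eq_iff_card_eq.2 hm
  have hs' (k) : k ∈ ({k | (π k : ℕ) < p} : Finset _) ↔ (π' k : ℕ) < p := by
    have hk := congrFun h k
    simp only [shuffleWord, decide_eq_decide] at hk
    simpa only [mem_filter, mem_univ, true_and, not_le] using not_congr hk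
  have he := (hπ.finSumFinEquiv_trans_symm hm hn (by simp)).trans
    (hπ'.finSumFinEquiv_trans_symm hm hn hs').symm
  have hsymm : π.symm = π'.symm := Equiv.ext fun a => by
    simpa using congr($he (finSumFinEquiv.symm a))
  simpa using congrArg Equiv.symm hsymm

theorem exists_isShuffle_shuffleWord_eq {w : Fin (p + q) → Bool}
    (hw : w ∈ wordsWithOnes (p + q) q) :
    ∃ π, IsShuffle p q π ∧ shuffleWord p π = w := by
  set s : Finset (Fin (p + q)) := {k | w k = false}
  have hn : #sᶜ = q := by simpa [s, compl_filter, wordsWithOnes] using hw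
  have hm : #s = p := card_compl_eq_iff_card_eq.1 hn
  set π : Equiv.Perm (Fin (p + q)) :=
    (finSumFinEquiv.symm.trans (finSumEquivOfFinset hm hn)).symm
  have hl (i : Fin p) : π.symm (Fin.castAdd q i) = s.orderEmbOfFin hm i := by simp [π]
  have hr (j : Fin q) : π.symm (Fin.natAdd p j) = sᶜ.orderEmbOfFin hn j := by simp [π]
  refine ⟨π, isShuffle_iff.2 ⟨fun i j hij => ?_, fun i j hij => ?_⟩, funext fun k => ?_⟩
  · simpa only [Function.comp_apply, hl] using (s.orderEmbOfFin hm).strictMono hij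
  · simpa only [Function.comp_apply, hr] using (sᶜ.orderEmbOfFin hn).strictMono hij
  · obtain ⟨a, rfl⟩ := π.symm.surjective k
    induction a using Fin.addCases with
    | left i =>
      have hmem := s.orderEmbOfFin_mem hm i
      rw [← hl, mem_filter] at hmem
      simp [shuffleWord, hmem.2]
    | right j =>
      have hmem := sᶜ.orderEmbOfFin_mem hn j
      rw [← hr, mem_compl, mem_filter] at hmem
      simpa [shuffleWord] using hmem

theorem sum_isShuffle_eq_wordDescentPoly (p q : ℕ) :
    ∑ π with IsShuffle p q π, (X : ℤ[X]) ^ desNum p q π = wordDescentPoly (p + q) q := by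
  refine sum_nbij (shuffleWord p) (fun π _ => shuffleWord_mem_wordsWithOnes π) ?_ ?_ ?_
  · intro π hπ π' hπ' h
    exact (mem_filter.1 hπ).2.eq_of_shuffleWord_eq (mem_filter.1 hπ').2 h
  · intro w hw
    obtain ⟨π, hπ, rfl⟩ := exists_isShuffle_shuffleWord_eq hw
    exact ⟨π, by simpa using hπ, rfl⟩
  · intro π hπ
    rw [(mem_filter.1 hπ).2.desNum_eq]

end Shuffles

theorem stmt3_general (p q : ℕ) :
    ∑ π ∈ Finset.univ.filter (fun π : Equiv.Perm (Fin (p + q)) =>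
        ∀ a b : Fin (p + q), a < b → (((a : ℕ) < p) ↔ ((b : ℕ) < p)) → π.symm a < π.symm b),
      (X : Polynomial ℤ) ^ desNum p q π
    = ∑ i ∈ Finset.range (min p q + 1), C ((p.choose i : ℤ) * q.choose i) * X ^ i := by
  rw [← binomProdPoly, ← wordDescentPoly_add_self]
  exact sum_isShuffle_eq_wordDescentPoly p q

/-- The `P`-Eulerian polynomial of the naturally labeled poset on `[p+q]` that is the
disjoint union of two chains `1 < ⋯ < p` and `p+1 < ⋯ < p+q` equals
`∑_{i=0}^{min(p,q)} C(p,i) C(q,i) x^i`.  Linear extensions are permutations `π` such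
that whenever `a <_P b` (i.e. `a < b` and `a, b` lie in the same chain) we have
`π⁻¹(a) < π⁻¹(b)`. -/
theorem stmt3 (p q : ℕ) (hp : 0 < p) (hq : 0 < q) :
    ∑ π ∈ Finset.univ.filter (fun π : Equiv.Perm (Fin (p + q)) =>
        ∀ a b : Fin (p + q), a < b → (((a : ℕ) < p) ↔ ((b : ℕ) < p)) → π.symm a < π.symm b),
      (X : Polynomial ℤ) ^ desNum p q π
    = ∑ i ∈ Finset.range (min p q + 1), C ((p.choose i : ℤ) * q.choose i) * X ^ i :=
  stmt3_general p q
end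

section
/- Let G be a simple graph on [d], B(G) = {0, ±e₁, …, ±e_d} ∪ {±e_i ± e_j : {i,j} ∈ E(G)}, B_G = conv(B(G)), and for ε ∈ {-1,1}^d let O_ε = {x ∈ ℝ^d : ε_i x_i ≥ 0 for all i}. Then B_G ∩ O_ε = conv(B(G) ∩ O_ε). -/
/-!
`B(G)` is closed under zeroing any set of coordinates. Writing `x ∈ B_G ∩ O_ε` as a convex
combination of points `z` of `B(G)` and zeroing in each `z` the coordinates of the wrong sign
gives a point `y ∈ conv(B(G) ∩ O_ε)` with `0 ≤ εᵢ xᵢ ≤ εᵢ yᵢ` for all `i`. A convex set closed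
under zeroing coordinates is closed under shrinking each coordinate towards `0` independently
(shrinking one coordinate is a convex combination of a point and that point with the coordinate
zeroed), so `x ∈ conv(B(G) ∩ O_ε)`.
-/

/-- The `i`-th standard unit vector in `ℝ^d`. -/
noncomputable def stdVec (d : ℕ) (i : Fin d) : Fin d → ℝ := Pi.single i 1

/-- The point configuration `B(G) = {0, ±e₁, …, ±e_d} ∪ {±e_i ± e_j : {i,j} ∈ E(G)}`. -/
def BSet {d : ℕ} (G : SimpleGraph (Fin d)) : Set (Fin d → ℝ) :=
  {0} ∪ {x | ∃ i, x = stdVec d i ∨ x = -stdVec d i} ∪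
    {x | ∃ i j, G.Adj i j ∧
      (x = stdVec d i + stdVec d j ∨ x = stdVec d i - stdVec d j ∨
       x = -stdVec d i + stdVec d j ∨ x = -stdVec d i - stdVec d j)}

open Set

section Orthant

variable {ι : Type*}

def orthant (ε : ι → ℝ) : Set (ι → ℝ) := {x | ∀ i, 0 ≤ ε i * x i}

lemma convex_orthant (ε : ι → ℝ) : Convex ℝ (orthant ε) := by
  intro x hx y hy a b ha hb _ i
  simp only [Pi.add_apply, Pi.smul_apply, smul_eq_mul, mul_add, mul_left_comm (ε i)]
  exact add_nonneg (mul_nonneg ha (hx i)) (mul_nonneg hb (hy i))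

lemma indicator_mem_orthant {ε x : ι → ℝ} (hx : x ∈ orthant ε) (s : Set ι) :
    s.indicator x ∈ orthant ε := by
  intro i
  by_cases hi : i ∈ s <;> simp [hi, hx i]

lemma mul_indicator_setOf_mul_nonneg (ε v : ι → ℝ) (i : ι) :
    ε i * {j | 0 ≤ ε j * v j}.indicator v i = max (ε i * v i) 0 := by
  by_cases h : 0 ≤ ε i * v i
  · simp [h]
  · simp [h, (not_le.mp h).le]

lemma mem_segment_zero_of_mul_le {ε a b : ℝ} (hε : ε ≠ 0) (ha : 0 ≤ ε * a)
    (hab : ε * a ≤ ε * b) :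
    a ∈ segment ℝ 0 b := by
  rw [segment_eq_uIcc, Set.mem_uIcc]
  rcases hε.lt_or_gt with h | h
  · right; constructor <;> nlinarith
  · left; constructor <;> nlinarith

lemma convexHull_indicator_mem {S : Set (ι → ℝ)} (hS : ∀ v ∈ S, ∀ s : Set ι, s.indicator v ∈ S)
    {y : ι → ℝ} (hy : y ∈ convexHull ℝ S) (s : Set ι) : s.indicator y ∈ convexHull ℝ S := by
  have hlin : IsLinearMap ℝ (s.indicator : (ι → ℝ) → ι → ℝ) :=
    ⟨indicator_add' s, fun c v => by ext i; by_cases hi : i ∈ s <;> simp [hi]⟩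
  have h : convexHull ℝ S ⊆ s.indicator ⁻¹' convexHull ℝ S :=
    convexHull_min (fun v hv => subset_convexHull ℝ S (hS v hv s))
      ((convex_convexHull ℝ S).is_linear_preimage hlin)
  exact h hy

lemma Convex.mem_of_forall_mem_segment_zero [Finite ι] {C : Set (ι → ℝ)} (hC : Convex ℝ C)
    (hmask : ∀ y ∈ C, ∀ s : Set ι, s.indicator y ∈ C) {x y : ι → ℝ} (hy : y ∈ C)
    (hxy : ∀ i, x i ∈ segment ℝ 0 (y i)) : x ∈ C := by
  classical
  cases nonempty_fintype ι
  suffices h : ∀ s : Finset ι, ∀ x : ι → ℝ, (∀ i ∉ s, x i = y i) →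
      (∀ i, x i ∈ segment ℝ 0 (y i)) → x ∈ C from h Finset.univ x (by simp) hxy
  intro s
  induction s using Finset.induction_on with
  | empty => intro x hx _; rwa [funext fun i => hx i (Finset.notMem_empty i)]
  | insert k s _ ih =>
    intro x hxs hxy
    set x' := Function.update x k (y k)
    have hx' : x' ∈ C := by
      refine ih x' (fun i hi => ?_) (fun i => ?_)
      · by_cases hik : i = k
        · simp [x', hik]
        · simp [x', hik, hxs i (by simp [hik, hi])]
      · by_cases hik : i = k
        · simpa [x', hik] using right_mem_segment ℝ 0 (y k)
        · simpa [x', hik] using hxy i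
    obtain ⟨a, b, ha, hb, hab, hxk⟩ := hxy k
    have hx : x = a • ({k}ᶜ : Set ι).indicator x' + b • x' := by
      funext i
      by_cases hik : i = k
      · subst hik; simpa [x'] using hxk.symm
      · simp [x', hik, ← add_mul, hab]
    rw [hx]
    exact hC (hmask x' hx' _) hx' ha hb hab

lemma exists_mem_convexHull_inter_orthant_mul_le {S : Set (ι → ℝ)}
    (hS : ∀ v ∈ S, ∀ s : Set ι, s.indicator v ∈ S) (ε : ι → ℝ) {x : ι → ℝ}
    (hx : x ∈ convexHull ℝ S) :
    ∃ y ∈ convexHull ℝ (S ∩ orthant ε), ∀ i, ε i * x i ≤ ε i * y i := by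
  suffices h : convexHull ℝ S ⊆
      {x | ∃ y ∈ convexHull ℝ (S ∩ orthant ε), ∀ i, ε i * x i ≤ ε i * y i} from h hx
  refine convexHull_min (fun v hv => ?_) ?_
  · refine ⟨{j | 0 ≤ ε j * v j}.indicator v, subset_convexHull ℝ _ ⟨hS v hv _, fun i => ?_⟩,
      fun i => ?_⟩
    · rw [mul_indicator_setOf_mul_nonneg]; exact le_max_right _ _
    · rw [mul_indicator_setOf_mul_nonneg]; exact le_max_left _ _
  · rintro x₁ ⟨y₁, hy₁, h₁⟩ x₂ ⟨y₂, hy₂, h₂⟩ a b ha hb hab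
    refine ⟨a • y₁ + b • y₂, convex_convexHull ℝ _ hy₁ hy₂ ha hb hab, fun i => ?_⟩
    simp only [Pi.add_apply, Pi.smul_apply, smul_eq_mul, mul_add, mul_left_comm (ε i)]
    exact add_le_add (mul_le_mul_of_nonneg_left (h₁ i) ha) (mul_le_mul_of_nonneg_left (h₂ i) hb)

theorem convexHull_inter_orthant [Finite ι] {S : Set (ι → ℝ)}
    (hS : ∀ v ∈ S, ∀ s : Set ι, s.indicator v ∈ S) {ε : ι → ℝ} (hε : ∀ i, ε i ≠ 0) :
    convexHull ℝ S ∩ orthant ε = convexHull ℝ (S ∩ orthant ε) := by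
  refine Subset.antisymm ?_ (subset_inter (convexHull_mono inter_subset_left)
    (convexHull_min inter_subset_right (convex_orthant ε)))
  rintro x ⟨hxS, hxO⟩
  obtain ⟨y, hy, hxy⟩ := exists_mem_convexHull_inter_orthant_mul_le hS ε hxS
  have hmask : ∀ v ∈ S ∩ orthant ε, ∀ s : Set ι, s.indicator v ∈ S ∩ orthant ε :=
    fun v hv s => ⟨hS v hv.1 s, indicator_mem_orthant hv.2 s⟩
  exact (convex_convexHull ℝ _).mem_of_forall_mem_segment_zero
    (fun _ hz s => convexHull_indicator_mem hmask hz s) hy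
    (fun i => mem_segment_zero_of_mul_le (hε i) (hxO i) (hxy i))

end Orthant

section BSet

variable {d : ℕ} {G : SimpleGraph (Fin d)}

lemma smul_stdVec_mem_BSet (a : SignType) (i : Fin d) : (a : ℝ) • stdVec d i ∈ BSet G := by
  cases a
  · exact Or.inl (Or.inl (by simp))
  · exact Or.inl (Or.inr ⟨i, Or.inr (by simp)⟩)
  · exact Or.inl (Or.inr ⟨i, Or.inl (by simp)⟩)

lemma smul_stdVec_add_smul_stdVec_mem_BSet (a b : SignType) {i j : Fin d} (hij : G.Adj i j) :
    (a : ℝ) • stdVec d i + (b : ℝ) • stdVec d j ∈ BSet G := by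
  rcases eq_or_ne a 0 with rfl | ha
  · simpa using smul_stdVec_mem_BSet (G := G) b j
  rcases eq_or_ne b 0 with rfl | hb
  · simpa using smul_stdVec_mem_BSet (G := G) a i
  refine Or.inr ⟨i, j, hij, ?_⟩
  cases a <;> cases b <;> simp_all [sub_eq_add_neg]

lemma mem_BSet_iff {v : Fin d → ℝ} :
    v ∈ BSet G ↔ v = 0 ∨ (∃ (a : SignType) (i : Fin d), v = (a : ℝ) • stdVec d i) ∨
      ∃ (a b : SignType) (i j : Fin d), G.Adj i j ∧
        v = (a : ℝ) • stdVec d i + (b : ℝ) • stdVec d j := by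
  constructor
  · rintro ((h | ⟨i, h | h⟩) | ⟨i, j, hij, h | h | h | h⟩)
    · exact Or.inl h
    · exact Or.inr (Or.inl ⟨1, i, by simp [h]⟩)
    · exact Or.inr (Or.inl ⟨-1, i, by simp [h]⟩)
    · exact Or.inr (Or.inr ⟨1, 1, i, j, hij, by simp [h]⟩)
    · exact Or.inr (Or.inr ⟨1, -1, i, j, hij, by simp [h, sub_eq_add_neg]⟩)
    · exact Or.inr (Or.inr ⟨-1, 1, i, j, hij, by simp [h]⟩)
    · exact Or.inr (Or.inr ⟨-1, -1, i, j, hij, by simp [h, sub_eq_add_neg]⟩)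
  · rintro (rfl | ⟨a, i, rfl⟩ | ⟨a, b, i, j, hij, rfl⟩)
    · exact Or.inl (Or.inl rfl)
    · exact smul_stdVec_mem_BSet a i
    · exact smul_stdVec_add_smul_stdVec_mem_BSet a b hij

lemma indicator_smul_stdVec (s : Set (Fin d)) [DecidablePred (· ∈ s)] (a : SignType)
    (i : Fin d) :
    s.indicator ((a : ℝ) • stdVec d i) =
      ((if i ∈ s then a else 0 : SignType) : ℝ) • stdVec d i := by
  ext k
  by_cases hk : k = i
  · subst hk; by_cases hs : k ∈ s <;> simp [hs]
  · by_cases hs : k ∈ s <;> simp [hs, stdVec, hk]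

lemma indicator_mem_BSet {v : Fin d → ℝ} (hv : v ∈ BSet G) (s : Set (Fin d)) :
    s.indicator v ∈ BSet G := by
  classical
  rcases mem_BSet_iff.mp hv with rfl | ⟨a, i, rfl⟩ | ⟨a, b, i, j, hij, rfl⟩
  · simpa using hv
  · rw [indicator_smul_stdVec]; exact smul_stdVec_mem_BSet _ i
  · rw [indicator_add', indicator_smul_stdVec, indicator_smul_stdVec]
    exact smul_stdVec_add_smul_stdVec_mem_BSet _ _ hij

end BSet

/-- Intersecting `B_G` with any closed orthant `O_ε` gives the convex hull of the
points of `B(G)` lying in that orthant. -/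
theorem stmt6 (d : ℕ) (G : SimpleGraph (Fin d)) (ε : Fin d → ℝ)
    (hε : ∀ i, ε i = 1 ∨ ε i = -1) :
    convexHull ℝ (BSet G) ∩ {x | ∀ i, 0 ≤ ε i * x i} =
      convexHull ℝ (BSet G ∩ {x | ∀ i, 0 ≤ ε i * x i}) := by
  have hε₀ : ∀ i, ε i ≠ 0 := fun i => by rcases hε i with h | h <;> simp [h]
  exact convexHull_inter_orthant (fun v hv s => indicator_mem_BSet hv s) hε₀
end

section
/- Let W(P)(x) = 3x⁸ + 86x⁷ + 658x⁶ + 1946x⁵ + 2534x⁴ + 1420x³ + 336x² + 32x + 1. Then W(P)(x) is not real-rooted (it has a non-real complex root), but has nonnegative coefficients and is log-concave. -/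
/-!
If every root `a` of a complex polynomial `p` is real, then `|z - a| ≥ |Re z - a|` for each
factor of `p(z) = c ∏ (z - a)`, so `|p(Re z)| ≤ |p(z)|`. For `W = WStem` this fails at
`z = -9/5 + i/8`: `|W(-9/5)| ≈ 26.1` while `|W(z)| ≈ 18.3`.
-/

open Polynomial

/-- Stembridge's `P`-Eulerian polynomial, a counterexample to the Neggers–Stanley
conjecture. -/
noncomputable def WStem : Polynomial ℝ :=
  3 * X ^ 8 + 86 * X ^ 7 + 658 * X ^ 6 + 1946 * X ^ 5 + 2534 * X ^ 4 +
    1420 * X ^ 3 + 336 * X ^ 2 + 32 * X + 1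

namespace Polynomial

theorem norm_eval_eq_norm_leadingCoeff_mul_prod_roots (p : ℂ[X]) (z : ℂ) :
    ‖p.eval z‖ = ‖p.leadingCoeff‖ * (p.roots.map fun a => ‖z - a‖).prod := by
  conv_lhs => rw [(IsAlgClosed.splits p).eq_prod_roots]
  simp [eval_multiset_prod, Multiset.map_map, ← normHom_apply, map_multiset_prod]

theorem norm_eval_re_le_of_forall_mem_roots_im_eq_zero {p : ℂ[X]}
    (hp : ∀ a ∈ p.roots, a.im = 0) (z : ℂ) : ‖p.eval (z.re : ℂ)‖ ≤ ‖p.eval z‖ := by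
  simp only [norm_eval_eq_norm_leadingCoeff_mul_prod_roots]
  gcongr ?_ * ?_
  refine Multiset.prod_map_le_prod_map₀ _ _ (fun _ _ => norm_nonneg _) fun a ha => ?_
  have hre : (z.re : ℂ) - a = ((z - a).re : ℂ) := by
    apply Complex.ext <;> simp [hp a ha]
  rw [hre, Complex.norm_real, Real.norm_eq_abs]
  exact Complex.abs_re_le_norm _

end Polynomial

lemma natDegree_WStem_le : WStem.natDegree ≤ 8 := by
  unfold WStem
  compute_degree

lemma coeff_WStem (i : ℕ) :
    WStem.coeff i = [(1 : ℝ), 32, 336, 1420, 2534, 1946, 658, 86, 3].getD i 0 := by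
  rcases le_or_gt i 8 with hi | hi
  · interval_cases i <;> simp [WStem, coeff_X, coeff_one]
  · rw [coeff_eq_zero_of_natDegree_lt (natDegree_WStem_le.trans_lt hi),
      List.getD_eq_default _ _ (by simp; omega)]

lemma coeff_WStem_nonneg (i : ℕ) : 0 ≤ WStem.coeff i := by
  rw [coeff_WStem]
  rcases i with _ | _ | _ | _ | _ | _ | _ | _ | _ | i <;> norm_num

lemma coeff_WStem_mul_coeff_le_sq (i : ℕ) :
    WStem.coeff i * WStem.coeff (i + 2) ≤ WStem.coeff (i + 1) ^ 2 := by
  simp only [coeff_WStem]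
  rcases i with _ | _ | _ | _ | _ | _ | _ | _ | _ | i <;> norm_num

lemma exists_eval_map_WStem_eq_zero_im_ne_zero :
    ∃ z : ℂ, (WStem.map (algebraMap ℝ ℂ)).eval z = 0 ∧ z.im ≠ 0 := by
  by_contra! hreal
  have hle := norm_eval_re_le_of_forall_mem_roots_im_eq_zero
    (fun a ha => hreal a (mem_roots'.1 ha).2) ⟨-9/5, 1/8⟩
  have hx : (WStem.map (algebraMap ℝ ℂ)).eval ((-9/5 : ℝ) : ℂ) = ⟨10185568/390625, 0⟩ := by
    apply Complex.ext <;> simp [WStem] <;> norm_num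
  have hz : (WStem.map (algebraMap ℝ ℂ)).eval ⟨-9/5, 1/8⟩ =
      ⟨93555245824163/6553600000000, 941336430013/81920000000⟩ := by
    apply Complex.ext <;> simp [WStem, pow_succ, Complex.mul_re, Complex.mul_im] <;> norm_num
  rw [hx, hz, ← sq_le_sq₀ (norm_nonneg _) (norm_nonneg _), Complex.sq_norm, Complex.sq_norm,
    Complex.normSq_mk, Complex.normSq_mk] at hle
  norm_num at hle

/-- `W(P)(x)` has a non-real root, nonnegative coefficients, and is log-concave. -/
theorem stmt10 :
    (∃ z : ℂ, (WStem.map (algebraMap ℝ ℂ)).eval z = 0 ∧ z.im ≠ 0) ∧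
    (∀ i, 0 ≤ WStem.coeff i) ∧
    (∀ i, WStem.coeff i * WStem.coeff (i + 2) ≤ (WStem.coeff (i + 1)) ^ 2) :=
  ⟨exists_eval_map_WStem_eq_zero_im_ne_zero, coeff_WStem_nonneg, coeff_WStem_mul_coeff_le_sq⟩
end

section
/- Let P be a d-dimensional lattice polytope decomposed as a union P = ⋃_{ε} P_ε over 2^d pieces, each lattice-equivalent to a fixed polytope Q, such that intersections of pieces are lower-dimensional slices indexed by induced sub-decompositions. Concretely (as in the paper): if L_{B_G}(n) denotes the Ehrhart polynomial of B_G for a graph G on [d], and L_{P_H̃}(n) the Ehrhart polynomial of the orthant piece for each induced subgraph H of G, then L_{B_G}(n) = ∑_{j=0}^{d} 2^j (-1)^{d-j} ∑_{H ∈ S_j(G)} L_{P_H̃}(n), where S_j(G) is the set of induced subgraphs of G on j vertices. -/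
/-!
Coordinatewise absolute value folds `conv B(G)` onto its nonnegative piece: `x ∈ conv B(G)` iff
`|x| ∈ conv Q(G, [d])`, because `conv Q(G, [d])` is a down-set of the nonnegative orthant that is
stable under coordinatewise scaling by `[0, 1]^d`. The piece `conv Q(G, S)` is the face of points
of `conv Q(G, [d])` supported in `S`. So a lattice point `y` of `n • conv Q(G, [d])` has
`2 ^ #supp y` preimages in `n • conv B(G)`, and lies in `n • conv Q(G, S)` iff `supp y ⊆ S`. The
theorem then reduces to `∑_{S ⊇ T} 2 ^ #S (-1) ^ (d - #S) = 2 ^ #T`, which is the expansion of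
`∏ i, (2 - [i ∉ T])`.
-/

open Finset Pointwise

/-- The generating points of the nonnegative-orthant piece of `B_H` for the induced
subgraph `H` of `G` on the vertex set `S` (a copy of the edge polytope of `H̃`). -/
def QSet {d : ℕ} (G : SimpleGraph (Fin d)) (S : Finset (Fin d)) : Set (Fin d → ℝ) :=
  {0} ∪ {x | ∃ i ∈ S, x = stdVec d i} ∪
    {x | ∃ i ∈ S, ∃ j ∈ S, G.Adj i j ∧ x = stdVec d i + stdVec d j}

theorem Convex.add_smul_add_smul_mem {𝕜 E : Type*} [CommRing 𝕜] [PartialOrder 𝕜]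
    [IsOrderedRing 𝕜] [AddCommGroup E] [Module 𝕜 E] {K : Set E} (hK : Convex 𝕜 K) {p u v : E}
    (hp : p ∈ K) (hu : p + u ∈ K) (hv : p + v ∈ K) (huv : p + u + v ∈ K) {a b : 𝕜}
    (ha : a ∈ Set.Icc 0 1) (hb : b ∈ Set.Icc 0 1) : p + a • u + b • v ∈ K := by
  have hpv : p + b • v ∈ K := by simpa using hK.add_smul_sub_mem hp hv hb
  have hpuv : p + u + b • v ∈ K := by simpa using hK.add_smul_sub_mem hu huv hb
  convert hK.add_smul_sub_mem hpv hpuv ha using 1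
  module

theorem Finset.sum_pow_mul_neg_one_pow_mul_card_supersets {ι : Type*} [Fintype ι]
    [DecidableEq ι] (T : Finset ι) :
    ∑ j ∈ range (Fintype.card ι + 1), (2 : ℤ) ^ j * (-1) ^ (Fintype.card ι - j) *
      #{S ∈ powersetCard j univ | T ⊆ S} = 2 ^ #T := by
  calc _ = ∑ S ∈ univ.powerset, (∏ _ ∈ S, (2 : ℤ)) * ∏ i ∈ univ \ S, if i ∉ T then -1 else 0 := by
        rw [sum_powerset, card_univ]
        refine sum_congr rfl fun j _ => ?_
        rw [natCast_card_filter, mul_sum]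
        refine sum_congr rfl fun S hS => ?_
        obtain ⟨-, rfl⟩ := mem_powersetCard.1 hS
        have hT : (∀ i ∈ univ \ S, i ∉ T) ↔ T ⊆ S := by
          simp only [mem_sdiff, mem_univ, true_and, subset_iff]
          exact forall_congr' fun i => not_imp_not
        simp only [prod_const, prod_ite_zero, card_sdiff_of_subset (subset_univ S), card_univ, hT]
        split_ifs <;> ring
    _ = ∏ i, (2 + if i ∉ T then -1 else 0) := (prod_add _ _ _).symm
    _ = ∏ i, if i ∈ T then 2 else 1 := prod_congr rfl fun i _ => by split_ifs <;> norm_num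
    _ = 2 ^ #T := by rw [Fintype.prod_ite_mem, prod_const]

theorem Finset.ncard_setOf_abs_mem {ι : Type*} [Fintype ι] [DecidableEq ι] (N : Finset (ι → ℤ))
    (hN : ∀ y ∈ N, 0 ≤ y) : {x : ι → ℤ | |x| ∈ N}.ncard = ∑ y ∈ N, 2 ^ #{i | y i ≠ 0} := by
  have hfiber : ∀ y ∈ N, ∀ x : ι → ℤ,
      x ∈ Fintype.piFinset (fun i => {y i, -y i}) ↔ |x| = y := by
    intro y hy x
    simp only [Fintype.mem_piFinset, mem_insert, mem_singleton, funext_iff, Pi.abs_apply]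
    exact forall_congr' fun i => (abs_eq (hN y hy i)).symm
  have hunion : {x : ι → ℤ | |x| ∈ N} =
      ↑(N.biUnion fun y => Fintype.piFinset fun i => {y i, -y i}) := by
    ext x
    simp only [Set.mem_ofPred_eq, coe_biUnion, mem_coe, Set.mem_iUnion, exists_prop]
    refine ⟨fun hx => ⟨_, hx, (hfiber _ hx x).2 rfl⟩, fun ⟨y, hy, hx⟩ => ?_⟩
    rwa [(hfiber y hy x).1 hx]
  rw [hunion, Set.ncard_coe_finset, card_biUnion]
  · refine sum_congr rfl fun y _ => ?_
    have hpair : ∀ i, #{y i, -y i} = if y i ≠ 0 then 2 else 1 := fun i => by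
      split_ifs with h
      · exact card_pair (by omega)
      · simp [not_not.1 h]
    rw [Fintype.card_piFinset, prod_congr rfl fun i _ => hpair i, prod_ite, prod_const,
      prod_const_one, mul_one]
  · intro y hy y' hy' hne
    refine disjoint_left.2 fun x hx hx' => hne ?_
    exact ((hfiber y hy x).1 hx).symm.trans ((hfiber y' hy' x).1 hx')

theorem Finset.sum_pow_mul_neg_one_pow_mul_sum_card_filter_subset {α ι : Type*} [Fintype ι]
    [DecidableEq ι] (N : Finset α) (f : α → Finset ι) :
    ∑ j ∈ range (Fintype.card ι + 1), (2 : ℤ) ^ j * (-1) ^ (Fintype.card ι - j) *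
      ∑ S ∈ powersetCard j univ, (#{y ∈ N | f y ⊆ S} : ℤ) = ∑ y ∈ N, 2 ^ #(f y) := by
  simp_rw [← sum_pow_mul_neg_one_pow_mul_card_supersets, natCast_card_filter, mul_sum]
  rw [sum_comm]
  refine sum_congr rfl fun j _ => ?_
  rw [sum_comm]

section ConvexHull

variable {d : ℕ} {G : SimpleGraph (Fin d)} {S T : Finset (Fin d)}

lemma smul_stdVec (i : Fin d) (a : ℝ) : a • stdVec d i = Pi.single i a := by
  simp [stdVec, ← Pi.single_smul]

lemma zero_mem_QSet : (0 : Fin d → ℝ) ∈ QSet G S := Or.inl (Or.inl rfl)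

lemma stdVec_mem_QSet {i : Fin d} (hi : i ∈ S) : stdVec d i ∈ QSet G S :=
  Or.inl (Or.inr ⟨i, hi, rfl⟩)

lemma stdVec_add_stdVec_mem_QSet {i j : Fin d} (hi : i ∈ S) (hj : j ∈ S) (hij : G.Adj i j) :
    stdVec d i + stdVec d j ∈ QSet G S :=
  Or.inr ⟨i, hi, j, hj, hij, rfl⟩

lemma QSet_mono (h : S ⊆ T) : QSet G S ⊆ QSet G T := by
  rintro x ((rfl | ⟨i, hi, rfl⟩) | ⟨i, hi, j, hj, hij, rfl⟩)
  · exact zero_mem_QSet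
  · exact stdVec_mem_QSet (h hi)
  · exact stdVec_add_stdVec_mem_QSet (h hi) (h hj) hij

lemma QSet_subset_BSet : QSet G S ⊆ BSet G := by
  rintro x ((rfl | ⟨i, -, rfl⟩) | ⟨i, -, j, -, hij, rfl⟩)
  · exact Or.inl (Or.inl rfl)
  · exact Or.inl (Or.inr ⟨i, Or.inl rfl⟩)
  · exact Or.inr ⟨i, j, hij, Or.inl rfl⟩

lemma convexHull_QSet_subset :
    convexHull ℝ (QSet G S) ⊆ Set.Icc 0 1 ∩ {y | ∀ i ∉ S, y i = 0} := by
  refine convexHull_min ?_ ((convex_Icc 0 1).inter fun x hx y hy a b _ _ _ i hi => ?_)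
  · rintro y ((rfl | ⟨i, hi, rfl⟩) | ⟨i, hi, j, hj, hij, rfl⟩)
    · simp
    · refine ⟨⟨fun k => ?_, fun k => ?_⟩, fun k hk => ?_⟩ <;>
        simp only [stdVec, Pi.single_apply, Pi.zero_apply, Pi.one_apply] <;> grind
    · refine ⟨⟨fun k => ?_, fun k => ?_⟩, fun k hk => ?_⟩ <;>
        simp only [stdVec, Pi.single_apply, Pi.add_apply, Pi.zero_apply, Pi.one_apply] <;>
        grind [hij.ne]
  · simp [hx i hi, hy i hi]

lemma mul_mem_convexHull_QSet {c y : Fin d → ℝ} (hc : c ∈ Set.Icc 0 1) (hcS : ∀ i ∉ S, c i = 0)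
    (hy : y ∈ convexHull ℝ (QSet G univ)) : c * y ∈ convexHull ℝ (QSet G S) := by
  have hK := convex_convexHull ℝ (QSet G S)
  have h0 := subset_convexHull ℝ _ (zero_mem_QSet (G := G) (S := S))
  have hsingle : ∀ i, Pi.single i (c i) ∈ convexHull ℝ (QSet G S) := fun i => by
    by_cases hi : i ∈ S
    · simpa [smul_stdVec] using
        hK.add_smul_sub_mem h0 (subset_convexHull ℝ _ (stdVec_mem_QSet hi)) ⟨hc.1 i, hc.2 i⟩
    · rwa [hcS i hi, Pi.single_zero]
  refine convexHull_min ?_ (hK.linear_preimage (LinearMap.mulLeft ℝ c)) hy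
  rintro v ((rfl | ⟨i, -, rfl⟩) | ⟨i, -, j, -, hij, rfl⟩) <;>
    simp only [Set.mem_preimage, LinearMap.mulLeft_apply, mul_zero, mul_add, stdVec,
      ← Pi.single_mul_right, mul_one]
  · exact h0
  · exact hsingle i
  · by_cases hi : i ∈ S
    · by_cases hj : j ∈ S
      · rw [← smul_stdVec, ← smul_stdVec]
        simpa using hK.add_smul_add_smul_mem h0
          (by simpa using subset_convexHull ℝ _ (stdVec_mem_QSet hi))
          (by simpa using subset_convexHull ℝ _ (stdVec_mem_QSet hj))
          (by simpa using subset_convexHull ℝ _ (stdVec_add_stdVec_mem_QSet hi hj hij))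
          ⟨hc.1 i, hc.2 i⟩ ⟨hc.1 j, hc.2 j⟩
      · rw [hcS j hj, Pi.single_zero, add_zero]
        exact hsingle i
    · rw [hcS i hi, Pi.single_zero, zero_add]
      exact hsingle j

lemma mem_convexHull_QSet_of_le {y z : Fin d → ℝ} (hy : y ∈ convexHull ℝ (QSet G S))
    (hz : 0 ≤ z) (hzy : z ≤ y) : z ∈ convexHull ℝ (QSet G S) := by
  obtain ⟨⟨hy0, -⟩, hyS⟩ := convexHull_QSet_subset hy
  have hzy' : z / y * y = z := funext fun i => by
    rcases (hy0 i).eq_or_lt with h | h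
    · simp [← h, le_antisymm (h ▸ hzy i) (hz i)]
    · exact div_mul_cancel₀ _ h.ne'
  rw [← hzy']
  refine mul_mem_convexHull_QSet ⟨fun i => div_nonneg (hz i) (hy0 i), fun i => ?_⟩
    (fun i hi => by simp [hyS i hi]) (convexHull_mono (QSet_mono (subset_univ S)) hy)
  exact div_le_one_of_le₀ (hzy i) (hy0 i)

lemma mem_BSet_cases {v : Fin d → ℝ} (hv : v ∈ BSet G) :
    v = 0 ∨ (∃ i a, |a| = 1 ∧ v = Pi.single i a) ∨
      ∃ i j a b, G.Adj i j ∧ |a| = 1 ∧ |b| = 1 ∧ v = Pi.single i a + Pi.single j b := by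
  rcases hv with (rfl | ⟨i, rfl | rfl⟩) | ⟨i, j, hij, rfl | rfl | rfl | rfl⟩
  · exact .inl rfl
  · exact .inr (.inl ⟨i, 1, by simp, rfl⟩)
  · exact .inr (.inl ⟨i, -1, by simp, by simp [stdVec, Pi.single_neg]⟩)
  · exact .inr (.inr ⟨i, j, 1, 1, hij, by simp, by simp, rfl⟩)
  · exact .inr (.inr ⟨i, j, 1, -1, hij, by simp, by simp,
      by simp [stdVec, sub_eq_add_neg, Pi.single_neg]⟩)
  · exact .inr (.inr ⟨i, j, -1, 1, hij, by simp, by simp, by simp [stdVec, Pi.single_neg]⟩)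
  · exact .inr (.inr ⟨i, j, -1, -1, hij, by simp, by simp,
      by simp [stdVec, sub_eq_add_neg, Pi.single_neg]⟩)

lemma abs_mem_QSet_univ {v : Fin d → ℝ} (hv : v ∈ BSet G) : |v| ∈ QSet G univ := by
  rcases mem_BSet_cases hv with rfl | ⟨i, a, ha, rfl⟩ | ⟨i, j, a, b, hij, ha, hb, rfl⟩
  · simpa using zero_mem_QSet
  · convert stdVec_mem_QSet (G := G) (mem_univ i) using 1
    ext k
    simp only [Pi.abs_apply, stdVec, Pi.single_apply]
    split_ifs <;> simp [ha]
  · convert stdVec_add_stdVec_mem_QSet (mem_univ i) (mem_univ j) hij using 1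
    ext k
    simp only [Pi.abs_apply, Pi.add_apply, stdVec, Pi.single_apply]
    have := hij.ne
    split_ifs <;> simp_all

lemma single_mem_convexHull_BSet (i : Fin d) {a : ℝ} (ha : |a| ≤ 1) :
    Pi.single i a ∈ convexHull ℝ (BSet G) := by
  have hpos : stdVec d i ∈ BSet G := Or.inl (Or.inr ⟨i, Or.inl rfl⟩)
  have hneg : -stdVec d i ∈ BSet G := Or.inl (Or.inr ⟨i, Or.inr rfl⟩)
  have ha' : (a + 1) / 2 ∈ Set.Icc (0 : ℝ) 1 := by
    constructor <;> linarith [abs_le.1 ha]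
  convert (convex_convexHull ℝ _).add_smul_sub_mem (subset_convexHull ℝ _ hneg)
    (subset_convexHull ℝ _ hpos) ha' using 1
  rw [← smul_stdVec]
  module

lemma single_add_single_mem_convexHull_BSet {i j : Fin d} (hij : G.Adj i j) {a b : ℝ}
    (ha : |a| ≤ 1) (hb : |b| ≤ 1) : Pi.single i a + Pi.single j b ∈ convexHull ℝ (BSet G) := by
  have hmem : ∀ v ∈ BSet G, v ∈ convexHull ℝ (BSet G) := subset_convexHull ℝ _
  have ha' : (a + 1) / 2 ∈ Set.Icc (0 : ℝ) 1 := by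
    constructor <;> linarith [abs_le.1 ha]
  have hb' : (b + 1) / 2 ∈ Set.Icc (0 : ℝ) 1 := by
    constructor <;> linarith [abs_le.1 hb]
  -- the square with corners `±e_i ± e_j`, based at `-e_i - e_j` with sides `2e_i` and `2e_j`
  convert (convex_convexHull ℝ _).add_smul_add_smul_mem (u := 2 • stdVec d i)
    (v := 2 • stdVec d j) (hmem _ (Or.inr ⟨i, j, hij, .inr (.inr (.inr rfl))⟩))
    (by convert hmem _ (Or.inr ⟨i, j, hij, .inr (.inl rfl)⟩) using 1; module)
    (by convert hmem _ (Or.inr ⟨i, j, hij, .inr (.inr (.inl rfl))⟩) using 1; module)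
    (by convert hmem _ (Or.inr ⟨i, j, hij, .inl rfl⟩) using 1; module) ha' hb' using 1
  rw [← smul_stdVec, ← smul_stdVec]
  module

lemma mul_mem_convexHull_BSet {c y : Fin d → ℝ} (hc : ∀ i, |c i| ≤ 1)
    (hy : y ∈ convexHull ℝ (BSet G)) : c * y ∈ convexHull ℝ (BSet G) := by
  have hca : ∀ i {a : ℝ}, |a| = 1 → |c i * a| ≤ 1 := fun i a ha => by
    rw [abs_mul, ha, mul_one]; exact hc i
  refine convexHull_min ?_
    ((convex_convexHull ℝ _).linear_preimage (LinearMap.mulLeft ℝ c)) hy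
  intro v hv
  rcases mem_BSet_cases hv with rfl | ⟨i, a, ha, rfl⟩ | ⟨i, j, a, b, hij, ha, hb, rfl⟩ <;>
    simp only [Set.mem_preimage, LinearMap.mulLeft_apply, mul_zero, mul_add,
      ← Pi.single_mul_right]
  · exact subset_convexHull ℝ _ (Or.inl (Or.inl rfl))
  · exact single_mem_convexHull_BSet i (hca i ha)
  · exact single_add_single_mem_convexHull_BSet hij (hca i ha) (hca j hb)

lemma mem_convexHull_BSet_iff {x : Fin d → ℝ} :
    x ∈ convexHull ℝ (BSet G) ↔ |x| ∈ convexHull ℝ (QSet G univ) := by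
  constructor
  · intro hx
    -- `{x | |x| ∈ conv Q}` is convex because `conv Q` is a down-set of the nonnegative orthant
    have hconv : Convex ℝ {x : Fin d → ℝ | |x| ∈ convexHull ℝ (QSet G univ)} := by
      intro x hx y hy a b ha hb hab
      refine mem_convexHull_QSet_of_le ((convex_convexHull ℝ _) hx hy ha hb hab)
        (abs_nonneg _) fun i => ?_
      simp only [Pi.abs_apply, Pi.add_apply, Pi.smul_apply, smul_eq_mul]
      calc |a * x i + b * y i| ≤ |a * x i| + |b * y i| := abs_add_le _ _
        _ = a * |x i| + b * |y i| := by rw [abs_mul, abs_mul, abs_of_nonneg ha, abs_of_nonneg hb]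
    exact convexHull_min
      (fun v hv => show |v| ∈ _ from subset_convexHull ℝ _ (abs_mem_QSet_univ hv)) hconv hx
  · intro hx
    have hsign : ∀ i, |(SignType.sign (x i) : ℝ)| ≤ 1 := fun i => by
      rcases SignType.sign (x i) with _ | _ | _ <;> simp
    convert mul_mem_convexHull_BSet hsign (convexHull_mono QSet_subset_BSet hx) using 1
    ext i
    simp

lemma mem_convexHull_QSet_iff {x : Fin d → ℝ} :
    x ∈ convexHull ℝ (QSet G S) ↔ x ∈ convexHull ℝ (QSet G univ) ∧ ∀ i ∉ S, x i = 0 := by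
  refine ⟨fun hx => ⟨convexHull_mono (QSet_mono (subset_univ S)) hx,
    (convexHull_QSet_subset hx).2⟩, fun ⟨hx, hxS⟩ => ?_⟩
  have hc : (fun i => if i ∈ S then 1 else 0 : Fin d → ℝ) ∈ Set.Icc 0 1 :=
    ⟨fun i => by dsimp; split_ifs <;> norm_num, fun i => by dsimp; split_ifs <;> norm_num⟩
  convert mul_mem_convexHull_QSet hc (fun i hi => if_neg hi) hx using 1
  ext i
  by_cases hi : i ∈ S <;> simp [hi, hxS]

end ConvexHull

def latticePoints {ι : Type*} (K : Set (ι → ℝ)) : Set (ι → ℤ) := {x | (fun i => (x i : ℝ)) ∈ K}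

section LatticePoints

variable {d : ℕ} {G : SimpleGraph (Fin d)} {S : Finset (Fin d)} {t : ℝ}

lemma abs_mem_latticePoints_smul_convexHull_QSet_univ_iff (ht : 0 < t) {x : Fin d → ℤ} :
    |x| ∈ latticePoints (t • convexHull ℝ (QSet G univ)) ↔
      x ∈ latticePoints (t • convexHull ℝ (BSet G)) := by
  simp only [latticePoints, Set.mem_ofPred_eq, Set.mem_smul_set_iff_inv_smul_mem₀ ht.ne',
    mem_convexHull_BSet_iff]
  convert Iff.rfl using 3
  ext i
  simp [abs_mul, abs_of_pos ht]

lemma mem_latticePoints_smul_convexHull_QSet_iff (ht : 0 < t) {x : Fin d → ℤ} :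
    x ∈ latticePoints (t • convexHull ℝ (QSet G S)) ↔
      x ∈ latticePoints (t • convexHull ℝ (QSet G univ)) ∧ ∀ i ∉ S, x i = 0 := by
  simp only [latticePoints, Set.mem_ofPred_eq, Set.mem_smul_set_iff_inv_smul_mem₀ ht.ne',
    mem_convexHull_QSet_iff (S := S)]
  simp [ht.ne']

lemma latticePoints_smul_convexHull_QSet_subset (n : ℕ) :
    latticePoints ((n : ℝ) • convexHull ℝ (QSet G S)) ⊆ Set.Icc 0 (n : Fin d → ℤ) := by
  rintro x ⟨y, hy, hxy⟩
  obtain ⟨⟨hy0, hy1⟩, -⟩ := convexHull_QSet_subset hy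
  have hx : ∀ i, (x i : ℝ) = n * y i := fun i => (congrFun hxy i).symm
  refine ⟨fun i => ?_, fun i => ?_⟩
  · have : (0 : ℝ) ≤ x i := by rw [hx]; exact mul_nonneg n.cast_nonneg (hy0 i)
    exact_mod_cast this
  · have : (x i : ℝ) ≤ n := by rw [hx]; exact mul_le_of_le_one_right n.cast_nonneg (hy1 i)
    exact_mod_cast this

end LatticePoints

/-- Inclusion–exclusion for Ehrhart polynomials:
`L_{B_G}(n) = ∑_{j=0}^d 2^j (-1)^{d-j} ∑_{H ∈ S_j(G)} L_{P_H̃}(n)`, where the inner sum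
runs over induced subgraphs of `G` on `j` vertices and lattice points are counted in
the `n`-th dilates. -/
theorem stmt16 (d : ℕ) (G : SimpleGraph (Fin d)) (n : ℕ) (hn : 0 < n) :
    (Set.ncard {x : Fin d → ℤ | (fun i => (x i : ℝ)) ∈
        (n : ℝ) • convexHull ℝ (BSet G)} : ℤ)
    = ∑ j ∈ Finset.range (d + 1), 2 ^ j * (-1) ^ (d - j) *
        ∑ S ∈ Finset.powersetCard j (Finset.univ : Finset (Fin d)),
          (Set.ncard {x : Fin d → ℤ | (fun i => (x i : ℝ)) ∈
            (n : ℝ) • convexHull ℝ (QSet G S)} : ℤ) := by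
  classical
  have ht : (0 : ℝ) < n := Nat.cast_pos.2 hn
  have hbox := latticePoints_smul_convexHull_QSet_subset (G := G) (S := univ) n
  have hfin := (Set.finite_Icc _ _).subset hbox
  set N := hfin.toFinset
  have hB : latticePoints ((n : ℝ) • convexHull ℝ (BSet G)) = {x | |x| ∈ N} := by
    ext x
    rw [Set.mem_ofPred_eq, hfin.mem_toFinset,
      abs_mem_latticePoints_smul_convexHull_QSet_univ_iff ht]
  have hQ : ∀ S, latticePoints ((n : ℝ) • convexHull ℝ (QSet G S)) =
      ↑{y ∈ N | ({i | y i ≠ 0} : Finset (Fin d)) ⊆ S} := by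
    intro S
    ext x
    rw [mem_coe, mem_filter, hfin.mem_toFinset, mem_latticePoints_smul_convexHull_QSet_iff ht]
    refine and_congr_right fun _ => ?_
    simp only [subset_iff, mem_filter, mem_univ, true_and]
    exact forall_congr' fun i => not_imp_comm
  change ((latticePoints _).ncard : ℤ) = ∑ j ∈ _, _ * ∑ S ∈ _, ((latticePoints _).ncard : ℤ)
  rw [hB, ncard_setOf_abs_mem N fun y hy => (hbox (hfin.mem_toFinset.1 hy)).1]
  simp only [hQ, Set.ncard_coe_finset]
  have := sum_pow_mul_neg_one_pow_mul_sum_card_filter_subset N fun y => {i | y i ≠ 0}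
  rw [Fintype.card_fin] at this
  push_cast
  exact this.symm
end

section
/- Let p, q ≥ 1 and d = p + q. Then the normalized volume of B_{K_{p,q}} is Vol(B_{K_{p,q}}) = 2^{p+q} ∑_{i=0}^{min(p,q)} C(p,i) C(q,i). -/
open Finset MeasureTheory

lemma crossVol (n : ℕ) (hn : 0 < n) :
    volume {u : Fin n → ℝ | ∑ i, |u i| ≤ 1} = ENNReal.ofReal (2 ^ n / n.factorial) := by
  haveI : Nonempty (Fin n) := ⟨⟨0, hn⟩⟩
  have h := MeasureTheory.volume_sum_rpow_le (ι := Fin n) (p := 1) le_rfl 1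
  simp only [Real.rpow_one, one_div_one, Fintype.card_fin] at h
  rw [h]
  have h2 : Real.Gamma (1 + 1) = 1 := by
    rw [show (1:ℝ) + 1 = (1:ℕ) + 1 by norm_num, Real.Gamma_nat_eq_factorial]; simp
  have h3 : Real.Gamma ((n:ℝ)/1 + 1) = n.factorial := by
    rw [show ((n:ℝ)/1 + 1) = (n:ℝ) + 1 by ring, Real.Gamma_nat_eq_factorial]
  rw [h2, h3]
  simp


lemma sum_single_eq (n : ℕ) (u : Fin n → ℝ) : ∑ i, Pi.single i (u i) = u := by
  funext k
  rw [Finset.sum_apply]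
  simp [Pi.single_apply]

lemma crossBall_convex (n : ℕ) : Convex ℝ {u : Fin n → ℝ | ∑ i, |u i| ≤ 1} := by
  intro x hx y hy a b ha hb hab
  simp only [Set.mem_setOf_eq] at *
  calc ∑ i, |(a • x + b • y) i| ≤ ∑ i, (a * |x i| + b * |y i|) := by
        refine Finset.sum_le_sum fun i _ => ?_
        simp only [Pi.add_apply, Pi.smul_apply, smul_eq_mul]
        calc |a * x i + b * y i| ≤ |a * x i| + |b * y i| := abs_add_le _ _
          _ = a * |x i| + b * |y i| := by
              rw [abs_mul, abs_mul, abs_of_nonneg ha, abs_of_nonneg hb]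
    _ = a * ∑ i, |x i| + b * ∑ i, |y i| := by
        rw [Finset.sum_add_distrib, Finset.mul_sum, Finset.mul_sum]
    _ ≤ a * 1 + b * 1 := by gcongr
    _ = 1 := by linarith

lemma crossHull (n : ℕ) (hn : 0 < n) :
    convexHull ℝ {u : Fin n → ℝ | ∃ i, u = Pi.single i 1 ∨ u = -Pi.single i 1} =
      {u : Fin n → ℝ | ∑ i, |u i| ≤ 1} := by
  apply le_antisymm
  · apply convexHull_min
    · rintro u ⟨i, hi | hi⟩ <;> subst hi <;>
        simp [Pi.single_apply, apply_ite, Finset.sum_ite_eq']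
    · exact crossBall_convex n
  · intro u hu
    simp only [Set.mem_setOf_eq] at hu
    set s := ∑ i, |u i| with hs
    set i0 : Fin n := ⟨0, hn⟩
    set V : Set (Fin n → ℝ) := {u : Fin n → ℝ | ∃ i, u = Pi.single i 1 ∨ u = -Pi.single i 1} with hV
    set zf : Fin n ⊕ Bool → (Fin n → ℝ) := fun j =>
      Sum.elim (fun i => if u i < 0 then -Pi.single i (1:ℝ) else Pi.single i 1)
        (fun b => if b then Pi.single i0 (1:ℝ) else -Pi.single i0 1) j with hzf
    have hmem : ∀ j, zf j ∈ convexHull ℝ V := by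
      intro j
      apply subset_convexHull
      rcases j with i | b
      · by_cases h : u i < 0 <;> simp [hzf, h, hV] <;> exact ⟨i, by simp⟩
      · cases b <;> simp [hzf, hV] <;> exact ⟨i0, by simp⟩
    have key := (convex_convexHull ℝ V).sum_mem
      (t := (Finset.univ : Finset (Fin n ⊕ Bool)))
      (w := fun j => Sum.elim (fun i => |u i|) (fun _ => (1 - s)/2) j)
      (z := zf)
      (fun j _ => by rcases j with i | b
                     · simpa using abs_nonneg (u i)
                     · simp only [Sum.elim_inr]; linarith)
      (by
        rw [Fintype.sum_sum_type]
        simp only [Sum.elim_inl, Sum.elim_inr]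
        rw [Fintype.sum_bool, ← hs]
        ring)
      (fun j _ => hmem j)
    have heq : (∑ j : Fin n ⊕ Bool,
        Sum.elim (fun i => |u i|) (fun _ => (1 - s)/2) j • zf j) = u := by
      rw [Fintype.sum_sum_type]
      simp only [Sum.elim_inl, Sum.elim_inr, hzf]
      rw [Fintype.sum_bool]
      have h1 : ∑ i, |u i| • (if u i < 0 then -Pi.single i (1:ℝ) else Pi.single i 1 : Fin n → ℝ) = u := by
        conv_rhs => rw [← sum_single_eq n u]
        refine Finset.sum_congr rfl fun i _ => ?_
        by_cases h : u i < 0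
        · simp only [h, if_true, smul_neg, ← Pi.single_smul, smul_eq_mul, mul_one]
          rw [abs_of_neg h, ← Pi.single_neg, neg_neg]
        · simp only [h, if_false, ← Pi.single_smul, smul_eq_mul, mul_one]
          rw [abs_of_nonneg (not_lt.1 h)]
      rw [h1]
      simp
    rwa [heq] at key


noncomputable def eqv (p q : ℕ) : (Fin (p+q) → ℝ) ≃ᵐ ((Fin p → ℝ) × (Fin q → ℝ)) :=
  (MeasurableEquiv.piCongrLeft (fun _ : Fin (p+q) => ℝ) finSumFinEquiv).symm.trans
    (MeasurableEquiv.sumPiEquivProdPi fun _ => ℝ)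

lemma eqv_apply (p q : ℕ) (x : Fin (p+q) → ℝ) :
    eqv p q x = (fun i => x (Fin.castAdd q i), fun j => x (Fin.natAdd p j)) := by
  unfold eqv
  ext i <;>
  simp [MeasurableEquiv.trans, MeasurableEquiv.symm, MeasurableEquiv.piCongrLeft,
    MeasurableEquiv.sumPiEquivProdPi, Equiv.sumPiEquivProdPi, Equiv.piCongrLeft_symm_apply]

lemma eqv_mp (p q : ℕ) : MeasurePreserving (eqv p q) volume volume := by
  have h1 := (volume_measurePreserving_piCongrLeft (fun _ : Fin (p+q) => ℝ) finSumFinEquiv).symm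
    (MeasurableEquiv.piCongrLeft (fun _ : Fin (p+q) => ℝ) finSumFinEquiv)
  have h2 := volume_measurePreserving_sumPiEquivProdPi (fun _ : Fin p ⊕ Fin q => ℝ)
  exact h2.comp h1

noncomputable def Lmap (p q : ℕ) : ((Fin p → ℝ) × (Fin q → ℝ)) →ₗ[ℝ] (Fin (p+q) → ℝ) where
  toFun z := fun k => Sum.elim z.1 z.2 (finSumFinEquiv.symm k)
  map_add' x y := by funext k; cases h : finSumFinEquiv.symm k <;> simp [h]
  map_smul' c x := by funext k; cases h : finSumFinEquiv.symm k <;> simp [h]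

lemma Lmap_eqv (p q : ℕ) (x : Fin (p+q) → ℝ) : Lmap p q (eqv p q x) = x := by
  funext k
  show Sum.elim (eqv p q x).1 (eqv p q x).2 (finSumFinEquiv.symm k) = x k
  rw [eqv_apply]
  cases h : finSumFinEquiv.symm k with
  | inl a => simp only [Sum.elim_inl]
             rw [← finSumFinEquiv_apply_left (n := q) a, ← h, Equiv.apply_symm_apply]
  | inr b => simp only [Sum.elim_inr]
             rw [← finSumFinEquiv_apply_right (m := p) b, ← h, Equiv.apply_symm_apply]

lemma Lmap_pair (p q : ℕ) (σ τ : ℝ) (i : Fin p) (j : Fin q) :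
    Lmap p q (σ • (Pi.single i 1 : Fin p → ℝ), τ • (Pi.single j 1 : Fin q → ℝ)) =
      σ • (Pi.single (Fin.castAdd q i) 1 : Fin (p+q) → ℝ) + τ • (Pi.single (Fin.natAdd p j) 1 : Fin (p+q) → ℝ) := by
  funext k
  show Sum.elim (σ • (Pi.single i 1 : Fin p → ℝ)) (τ • (Pi.single j 1 : Fin q → ℝ)) (finSumFinEquiv.symm k) = _
  cases h : finSumFinEquiv.symm k with
  | inl a =>
    have hk : k = Fin.castAdd q a := by
      rw [← finSumFinEquiv_apply_left (n := q) a, ← h, Equiv.apply_symm_apply]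
    subst hk
    simp only [Sum.elim_inl, Pi.add_apply, Pi.smul_apply, Pi.single_apply, smul_eq_mul,
      Fin.ext_iff, Fin.coe_castAdd, Fin.coe_natAdd]
    have ha := a.isLt
    split_ifs <;> first | omega | ring
  | inr b =>
    have hk : k = Fin.natAdd p b := by
      rw [← finSumFinEquiv_apply_right (m := p) b, ← h, Equiv.apply_symm_apply]
    subst hk
    simp only [Sum.elim_inr, Pi.add_apply, Pi.smul_apply, Pi.single_apply, smul_eq_mul,
      Fin.ext_iff, Fin.coe_castAdd, Fin.coe_natAdd]
    have hi := i.isLt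
    split_ifs <;> first | omega | ring


section helpers
lemma sumA {m d : ℕ} {f : Fin m → Fin d} (hf : Function.Injective f) (k : Fin d) :
    ∑ i, |(Pi.single k 1 : Fin d → ℝ) (f i)| ≤ 1 := by
  have h1 : ∀ i : Fin m, |(Pi.single k 1 : Fin d → ℝ) (f i)| = if f i = k then 1 else 0 := by
    intro i; simp [Pi.single_apply]; split_ifs <;> norm_num
  calc ∑ i, |(Pi.single k 1 : Fin d → ℝ) (f i)| = ∑ i, if f i = k then (1:ℝ) else 0 :=
        Finset.sum_congr rfl fun i _ => h1 i
    _ = ((Finset.univ.filter fun i => f i = k).card : ℝ) := by rw [Finset.sum_boole]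
    _ ≤ 1 := by
        have : (Finset.univ.filter fun i => f i = k).card ≤ 1 :=
          Finset.card_le_one.2 fun a ha b hb => hf (by
            simp only [Finset.mem_filter] at ha hb
            rw [ha.2, hb.2])
        exact_mod_cast this

lemma sumZ {m d : ℕ} (f : Fin m → Fin d) (k : Fin d) (h : ∀ i, f i ≠ k) :
    ∑ i, |(Pi.single k 1 : Fin d → ℝ) (f i)| = 0 := by
  refine Finset.sum_eq_zero fun i _ => ?_
  rw [Pi.single_apply, if_neg (h i), abs_zero]

lemma convex_comp {m d : ℕ} (f : Fin m → Fin d) :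
    Convex ℝ {x : Fin d → ℝ | ∑ i, |x (f i)| ≤ 1} := by
  intro x hx y hy a b ha hb hab
  simp only [Set.mem_setOf_eq] at *
  calc ∑ i, |(a • x + b • y) (f i)| ≤ ∑ i, (a * |x (f i)| + b * |y (f i)|) := by
        refine Finset.sum_le_sum fun i _ => ?_
        simp only [Pi.add_apply, Pi.smul_apply, smul_eq_mul]
        calc |a * x (f i) + b * y (f i)| ≤ |a * x (f i)| + |b * y (f i)| := abs_add_le _ _
          _ = a * |x (f i)| + b * |y (f i)| := by
              rw [abs_mul, abs_mul, abs_of_nonneg ha, abs_of_nonneg hb]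
    _ = a * ∑ i, |x (f i)| + b * ∑ i, |y (f i)| := by
        rw [Finset.sum_add_distrib, Finset.mul_sum, Finset.mul_sum]
    _ ≤ a * 1 + b * 1 := by gcongr
    _ = 1 := by linarith

lemma vand (p q : ℕ) :
    ∑ i ∈ Finset.range (min p q + 1), p.choose i * q.choose i = (p + q).choose q := by
  rw [Nat.add_choose_eq, Finset.Nat.sum_antidiagonal_eq_sum_range_succ_mk]
  have h1 : ∀ a ∈ Finset.range (q + 1), p.choose a * q.choose (q - a) = p.choose a * q.choose a := by
    intro a ha
    rw [Nat.choose_symm (Finset.mem_range_succ_iff.1 ha)]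
  rw [Finset.sum_congr rfl h1]
  apply Finset.sum_subset
  · intro a ha
    simp only [Finset.mem_range] at *
    omega
  · intro a ha hna
    simp only [Finset.mem_range] at ha hna
    have : p < a := by omega
    rw [Nat.choose_eq_zero_of_lt this, zero_mul]
end helpers

lemma pairSum {m d : ℕ} {f : Fin m → Fin d} (hf : Function.Injective f)
    (x : Fin d → ℝ) (I J : Fin d)
    (hb : ∀ k, |x k| ≤ |(Pi.single I 1 : Fin d → ℝ) k| + |(Pi.single J 1 : Fin d → ℝ) k|)
    (hz : (∀ i, f i ≠ I) ∨ (∀ i, f i ≠ J)) :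
    ∑ i, |x (f i)| ≤ 1 := by
  have step : ∑ i, |x (f i)| ≤
      (∑ i, |(Pi.single I 1 : Fin d → ℝ) (f i)|) + ∑ i, |(Pi.single J 1 : Fin d → ℝ) (f i)| := by
    rw [← Finset.sum_add_distrib]
    exact Finset.sum_le_sum fun i _ => hb (f i)
  rcases hz with h | h
  · have h0 := sumZ f I h
    have h1 := sumA hf J
    linarith
  · have h0 := sumZ f J h
    have h1 := sumA hf I
    linarith

/-- For the complete bipartite graph `K_{p,q}`, the normalized volume
(`(p+q)!` times the Euclidean volume) of `B_{K_{p,q}}` equals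
`2^{p+q} ∑_{i=0}^{min(p,q)} C(p,i) C(q,i)`. -/
theorem stmt19 (p q : ℕ) (hp : 0 < p) (hq : 0 < q) (G : SimpleGraph (Fin (p + q)))
    (hG : ∀ i j, G.Adj i j ↔ (((i : ℕ) < p) ↔ ¬((j : ℕ) < p))) :
    ((p + q).factorial : ENNReal) * volume (convexHull ℝ (BSet G)) =
      ((2 ^ (p + q) * ∑ i ∈ Finset.range (min p q + 1), p.choose i * q.choose i : ℕ) :
        ENNReal) := by
  -- basic injectivity and range facts
  have hinj1 : Function.Injective (Fin.castAdd q : Fin p → Fin (p+q)) := fun a b hab =>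
    Fin.ext (by simpa using congrArg Fin.val hab)
  have hinj2 : Function.Injective (Fin.natAdd p : Fin q → Fin (p+q)) := fun a b hab => by
    have := congrArg Fin.val hab
    simp only [Fin.coe_natAdd] at this
    exact Fin.ext (by omega)
  have hr1 : ∀ (k : Fin (p+q)), ¬ ((k : ℕ) < p) → ∀ i : Fin p, Fin.castAdd q i ≠ k := by
    intro k hk i hik
    apply hk
    rw [← hik]
    simpa using i.isLt
  have hr2 : ∀ (k : Fin (p+q)), ((k : ℕ) < p) → ∀ j : Fin q, Fin.natAdd p j ≠ k := by
    intro k hk j hjk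
    rw [← hjk] at hk
    simp only [Fin.coe_natAdd] at hk
    omega
  -- the slab description
  set S : Set (Fin (p+q) → ℝ) :=
    {x | ∑ i, |x (Fin.castAdd q i)| ≤ 1 ∧ ∑ j, |x (Fin.natAdd p j)| ≤ 1} with hS
  -- BSet ⊆ S
  have hBS : BSet G ⊆ S := by
    rintro x (hx | hx)
    · rcases hx with hx | ⟨i, hi | hi⟩
      · simp only [Set.mem_singleton_iff] at hx
        subst hx
        constructor <;> simp
      · subst hi
        exact ⟨sumA hinj1 i, sumA hinj2 i⟩
      · subst hi
        have e1 : ∀ (g : Fin p → Fin (p+q)) , ∑ a, |(-stdVec (p+q) i) (g a)| = ∑ a, |(stdVec (p+q) i) (g a)| := by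
          intro g; exact Finset.sum_congr rfl fun a _ => by simp
        have e2 : ∀ (g : Fin q → Fin (p+q)) , ∑ a, |(-stdVec (p+q) i) (g a)| = ∑ a, |(stdVec (p+q) i) (g a)| := by
          intro g; exact Finset.sum_congr rfl fun a _ => by simp
        exact ⟨le_trans (le_of_eq (e1 _)) (sumA hinj1 i), le_trans (le_of_eq (e2 _)) (sumA hinj2 i)⟩
    · obtain ⟨i, j, hadj, hx4⟩ := hx
      have adj : ((i : ℕ) < p) ↔ ¬((j : ℕ) < p) := (hG i j).1 hadj
      have hb : ∀ k, |x k| ≤ |(Pi.single i 1 : Fin (p+q) → ℝ) k| + |(Pi.single j 1 : Fin (p+q) → ℝ) k| := by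
        rcases hx4 with h | h | h | h <;> subst h <;> intro k <;>
          simp only [stdVec, Pi.add_apply, Pi.sub_apply, Pi.neg_apply, Pi.single_apply] <;>
          split_ifs <;> norm_num
      constructor
      · refine pairSum hinj1 x i j hb ?_
        by_cases hip : (i : ℕ) < p
        · exact Or.inr (hr1 j (adj.1 hip) )
        · exact Or.inl (hr1 i hip)
      · refine pairSum hinj2 x i j hb ?_
        by_cases hip : (i : ℕ) < p
        · exact Or.inl (hr2 i hip)
        · have hjp : (j : ℕ) < p := by
            by_contra hc
            exact hip (adj.2 hc)
          exact Or.inr (hr2 j hjp)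
  -- S is convex
  have hSconv : Convex ℝ S := by
    have : S = {x : Fin (p+q) → ℝ | ∑ i, |x (Fin.castAdd q i)| ≤ 1} ∩
        {x : Fin (p+q) → ℝ | ∑ j, |x (Fin.natAdd p j)| ≤ 1} := rfl
    rw [this]
    exact (convex_comp _).inter (convex_comp _)
  -- S ⊆ hull
  have hSsub : S ⊆ convexHull ℝ (BSet G) := by
    intro x hx
    have hx' : eqv p q x ∈ convexHull ℝ
        (({u : Fin p → ℝ | ∃ i, u = Pi.single i 1 ∨ u = -Pi.single i 1}) ×ˢ
         ({v : Fin q → ℝ | ∃ j, v = Pi.single j 1 ∨ v = -Pi.single j 1})) := by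
      rw [convexHull_prod, crossHull p hp, crossHull q hq, eqv_apply]
      exact ⟨hx.1, hx.2⟩
    have himg : Lmap p q (eqv p q x) ∈ convexHull ℝ
        ((Lmap p q) '' (({u : Fin p → ℝ | ∃ i, u = Pi.single i 1 ∨ u = -Pi.single i 1}) ×ˢ
         ({v : Fin q → ℝ | ∃ j, v = Pi.single j 1 ∨ v = -Pi.single j 1}))) := by
      rw [← LinearMap.image_convexHull]
      exact Set.mem_image_of_mem _ hx'
    rw [Lmap_eqv] at himg
    refine convexHull_mono ?_ himg
    rintro y ⟨⟨u, v⟩, ⟨⟨i, hu⟩, ⟨j, hv⟩⟩, rfl⟩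
    have hadj : G.Adj (Fin.castAdd q i) (Fin.natAdd p j) := by
      rw [hG]
      simp only [Fin.coe_castAdd, Fin.coe_natAdd]
      constructor
      · intro _; omega
      · intro _; exact i.isLt
    right
    refine ⟨Fin.castAdd q i, Fin.natAdd p j, hadj, ?_⟩
    rcases hu with hu | hu <;> rcases hv with hv | hv <;> subst hu <;> subst hv
    · left
      rw [show (Pi.single i 1 : Fin p → ℝ) = (1:ℝ) • (Pi.single i 1 : Fin p → ℝ) by simp,
          show (Pi.single j 1 : Fin q → ℝ) = (1:ℝ) • (Pi.single j 1 : Fin q → ℝ) by simp,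
          Lmap_pair]
      simp [stdVec]
    · right; left
      rw [show (Pi.single i 1 : Fin p → ℝ) = (1:ℝ) • (Pi.single i 1 : Fin p → ℝ) by simp,
          show (-Pi.single j 1 : Fin q → ℝ) = (-1:ℝ) • (Pi.single j 1 : Fin q → ℝ) by simp,
          Lmap_pair]
      simp [stdVec, sub_eq_add_neg]
    · right; right; left
      rw [show (-Pi.single i 1 : Fin p → ℝ) = (-1:ℝ) • (Pi.single i 1 : Fin p → ℝ) by simp,
          show (Pi.single j 1 : Fin q → ℝ) = (1:ℝ) • (Pi.single j 1 : Fin q → ℝ) by simp,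
          Lmap_pair]
      simp [stdVec]
    · right; right; right
      rw [show (-Pi.single i 1 : Fin p → ℝ) = (-1:ℝ) • (Pi.single i 1 : Fin p → ℝ) by simp,
          show (-Pi.single j 1 : Fin q → ℝ) = (-1:ℝ) • (Pi.single j 1 : Fin q → ℝ) by simp,
          Lmap_pair]
      simp [stdVec, sub_eq_add_neg]
  have hhull : convexHull ℝ (BSet G) = S := le_antisymm (convexHull_min hBS hSconv) hSsub
  -- preimage description
  have hpre : eqv p q ⁻¹' (({u : Fin p → ℝ | ∑ i, |u i| ≤ 1}) ×ˢ
      ({v : Fin q → ℝ | ∑ j, |v j| ≤ 1})) = S := by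
    ext x
    rw [Set.mem_preimage, eqv_apply]
    exact Iff.rfl
  -- volume computation
  have hmeas : NullMeasurableSet (({u : Fin p → ℝ | ∑ i, |u i| ≤ 1}) ×ˢ
      ({v : Fin q → ℝ | ∑ j, |v j| ≤ 1})) volume := by
    refine (MeasurableSet.prod ?_ ?_).nullMeasurableSet <;>
    · refine (isClosed_le ?_ continuous_const).measurableSet
      exact continuous_finset_sum _ fun i _ => (continuous_apply i).abs
  have hvol : volume (convexHull ℝ (BSet G)) =
      ENNReal.ofReal (2 ^ p / p.factorial) * ENNReal.ofReal (2 ^ q / q.factorial) := by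
    rw [hhull, ← hpre, (eqv_mp p q).measure_preimage hmeas]
    rw [show (volume : Measure ((Fin p → ℝ) × (Fin q → ℝ))) = Measure.prod volume volume from
      Measure.volume_eq_prod _ _, Measure.prod_prod, crossVol p hp, crossVol q hq]
  rw [hvol, vand]
  rw [← ENNReal.ofReal_mul (by positivity), ← ENNReal.ofReal_natCast ((p + q).factorial),
    ← ENNReal.ofReal_mul (by positivity), ← ENNReal.ofReal_natCast (2 ^ (p + q) * (p + q).choose q)]
  congr 1
  have key : ((p + q).choose q * q.factorial * p.factorial : ℝ) = (p + q).factorial := by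
    have h := Nat.choose_mul_factorial_mul_factorial (show q ≤ p + q by omega)
    rw [show p + q - q = p by omega] at h
    exact_mod_cast h
  have hp0 : (p.factorial : ℝ) ≠ 0 := by positivity
  have hq0 : (q.factorial : ℝ) ≠ 0 := by positivity
  push_cast
  field_simp
  rw [pow_add]
  linear_combination (-(2:ℝ)^p*2^q) * key
end
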